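/- arXiv:2507.17457 — 6 statements merged into one kernel-verified Lean document; each statement's English description precedes it below -/
import Mathlib

section
/- Let R be a DVR with uniformizer t and S = R[d]/(d(d−t)). For any R-module N, the S-modules N ⊗_R S and Hom_R(S, N) are isomorphic via the map sending x·1 + y·d to y·1* + (x + ty)·d*, where 1*, d* is the dual basis to 1, d. -/
/-!
The isomorphism is induced by the "Frobenius form" `(s, s') ↦ d*(s s')` on `S`, where `d*` is the
`d`-coordinate for the basis `1, d`: it sends `s ⊗ n` to `s' ↦ d*(s s') • n`, which is
`S`-linear by associativity of multiplication. Its Gram matrix in the basis `1, d` is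
`[[0, 1], [1, t]]`, of determinant `-1`, so `s ↦ d*(s · -)` is an isomorphism `S ≃ S^∨`, and
`S^∨ ⊗ N ≃ Hom_R(S, N)` because `S` is finite free.
-/

open Polynomial TensorProduct

namespace Module.Dual

variable {R S : Type*} [CommRing R] [CommRing S] [Algebra R S]
  [Module.Finite R S] [Module.Projective R S]

noncomputable def tensorEquivHom (φ : Module.Dual R S)
    (N : Type*) [AddCommGroup N] [Module R N]
    (hφ : Function.Bijective ((LinearMap.mul R S).compr₂ φ)) :
    S ⊗[R] N ≃ₗ[R] (S →ₗ[R] N) :=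
  LinearEquiv.rTensor N (LinearEquiv.ofBijective _ hφ) ≪≫ₗ dualTensorHomEquiv R S N

variable {N : Type*} [AddCommGroup N] [Module R N] (φ : Module.Dual R S)
  (hφ : Function.Bijective ((LinearMap.mul R S).compr₂ φ))

theorem tensorEquivHom_tmul_apply (s : S) (n : N) (s' : S) :
    φ.tensorEquivHom N hφ (s ⊗ₜ n) s' = φ (s * s') • n := by
  simp [tensorEquivHom, dualTensorHom_apply]

theorem tensorEquivHom_smul_apply (a : S) (m : S ⊗[R] N) (s : S) :
    φ.tensorEquivHom N hφ (a • m) s = φ.tensorEquivHom N hφ m (a * s) := by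
  induction m using TensorProduct.induction_on with
  | zero => simp
  | tmul s' n =>
    simp only [smul_tmul', smul_eq_mul, tensorEquivHom_tmul_apply, mul_assoc, mul_left_comm]
  | add m₁ m₂ ih₁ ih₂ => simp only [smul_add, map_add, LinearMap.add_apply, ih₁, ih₂]

end Module.Dual

namespace Module.Basis

variable {R S : Type*} [CommRing R] [CommRing S] [Algebra R S] {t : R} {d : S}
  (b : Basis (Fin 2) R S)

theorem repr_one_eq_single (hb0 : b 0 = 1) : b.repr 1 = Finsupp.single 0 1 := by
  rw [← hb0, repr_self]

theorem repr_eq_single_one (hb1 : b 1 = d) : b.repr d = Finsupp.single 1 1 := by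
  rw [← hb1, repr_self]

theorem repr_smul_one_add_repr_smul (hb0 : b 0 = 1) (hb1 : b 1 = d) (s : S) :
    b.repr s 0 • (1 : S) + b.repr s 1 • d = s := by
  rw [← hb0, ← hb1, ← Fin.sum_univ_two (fun i => b.repr s i • b i), b.sum_repr]

theorem repr_mul_apply_one (hb0 : b 0 = 1) (hb1 : b 1 = d) (hd : d * d = t • d) (s : S) :
    b.repr (s * d) 1 = b.repr s 0 + t * b.repr s 1 := by
  conv_lhs => rw [← b.repr_smul_one_add_repr_smul hb0 hb1 s]
  rw [add_mul, smul_mul_assoc, smul_mul_assoc, one_mul, hd, smul_smul, ← hb1]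
  simp [mul_comm]

theorem bijective_mul_compr₂_coord_one (hb0 : b 0 = 1) (hb1 : b 1 = d) (hd : d * d = t • d) :
    Function.Bijective ((LinearMap.mul R S).compr₂ (b.coord 1)) := by
  have hmul_d := b.repr_mul_apply_one hb0 hb1 hd
  refine ⟨?_, fun f => ⟨(f d - t * f 1) • (1 : S) + f 1 • d, ?_⟩⟩
  · rw [← LinearMap.ker_eq_bot, LinearMap.ker_eq_bot']
    intro s hs
    have hs1 : b.repr s 1 = 0 := by simpa using LinearMap.congr_fun hs 1
    have hs0 : b.repr s 0 = 0 := by simpa [hmul_d, hs1] using LinearMap.congr_fun hs d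
    rw [← b.repr_smul_one_add_repr_smul hb0 hb1 s, hs0, hs1, zero_smul, zero_smul, add_zero]
  · refine b.ext fun i => ?_
    fin_cases i
    · simp [hb0, b.repr_one_eq_single hb0, b.repr_eq_single_one hb1]
    · simp [hb1, hmul_d, b.repr_eq_single_one hb1]
      ring

end Module.Basis

namespace Polynomial

variable {R : Type*} [CommRing R] (t : R)

theorem monic_X_sq_sub_C_mul_X : ((X : R[X]) ^ 2 - C t * X).Monic := by
  simpa [sq, mul_sub] using monic_X.mul (monic_X_sub_C t)

theorem natDegree_X_sq_sub_C_mul_X [Nontrivial R] : ((X : R[X]) ^ 2 - C t * X).natDegree = 2 := by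
  compute_degree!

end Polynomial

namespace AdjoinRoot

variable {R : Type*} [CommRing R]

theorem exists_basis_one_root {g : R[X]} (hg : g.Monic) (h2 : g.natDegree = 2) :
    ∃ b : Module.Basis (Fin 2) R (AdjoinRoot g), b 0 = 1 ∧ b 1 = root g := by
  let b := (powerBasis' hg).basis.reindex (finCongr h2)
  have hb (i : Fin 2) : b i = root g ^ (i : ℕ) := by
    rw [Module.Basis.reindex_apply, PowerBasis.basis_eq_pow]; rfl
  exact ⟨b, by simpa using hb 0, by simpa using hb 1⟩

theorem root_mul_root (t : R) :
    root ((X : R[X]) ^ 2 - C t * X) * root (X ^ 2 - C t * X) = t • root (X ^ 2 - C t * X) := by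
  have h := eval₂_root ((X : R[X]) ^ 2 - C t * X)
  simp only [eval₂_sub, eval₂_mul, eval₂_X_pow, eval₂_C, eval₂_X] at h
  rw [Algebra.smul_def, algebraMap_eq]
  linear_combination h

end AdjoinRoot

/-- `S` is `AdjoinRoot (X² − tX)` with `d` its root. An `R`-linear equivalence is `S`-linear
iff it commutes with `d`, which acts on `Hom_R(S, N)` by `(d • f) s = f (d * s)`. -/
theorem stmt4 (R : Type*) [CommRing R] (t : R)
    (N : Type*) [AddCommGroup N] [Module R N] :
    letI S := AdjoinRoot ((X : Polynomial R) ^ 2 - C t * X)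
    letI d : S := AdjoinRoot.root _
    ∃ e : (S ⊗[R] N) ≃ₗ[R] (S →ₗ[R] N),
      (∀ (m : S ⊗[R] N) (s : S), e (d • m) s = e m (d * s)) ∧
      (∀ x y : N, e ((1 : S) ⊗ₜ[R] x + d ⊗ₜ[R] y) 1 = y ∧
        e ((1 : S) ⊗ₜ[R] x + d ⊗ₜ[R] y) d = x + t • y) := by
  rcases subsingleton_or_nontrivial R with hR | hR
  · have := Module.subsingleton R N
    exact ⟨LinearEquiv.ofSubsingleton _ _, fun _ _ => Subsingleton.elim _ _,
      fun _ _ => ⟨Subsingleton.elim _ _, Subsingleton.elim _ _⟩⟩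
  obtain ⟨b, hb0, hb1⟩ :=
    AdjoinRoot.exists_basis_one_root (monic_X_sq_sub_C_mul_X t) (natDegree_X_sq_sub_C_mul_X t)
  have := Module.Free.of_basis b
  have := Module.Finite.of_basis b
  have hd := AdjoinRoot.root_mul_root t
  refine ⟨Module.Dual.tensorEquivHom (b.coord 1) N (b.bijective_mul_compr₂_coord_one hb0 hb1 hd),
    fun m s => Module.Dual.tensorEquivHom_smul_apply _ _ _ m s, fun x y => ?_⟩
  simp [Module.Dual.tensorEquivHom_tmul_apply, hd, b.repr_one_eq_single hb0,
    b.repr_eq_single_one hb1]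
end

section
/- Let R be a complete DVR with uniformizer t, S = R[d]/(d(d−t)), and M an S-module that is finitely generated and free over R such that d acts as 0 on M/tM. Then d = t·e for an idempotent endomorphism e of M, and M decomposes as a direct sum of S-submodules M = (1−e)M ⊕ eM, where d acts as 0 on (1−e)M and as t on eM. -/
/-!
Since `M` is `R`-free and `t ≠ 0`, multiplication by `t` is injective on `M`, so the hypothesis
`dM ⊆ tM` lets us divide: `d = t • e` for a unique linear `e`. Dividing `d ∘ d = t • d` by `t²`
gives `e ∘ e = e`, and the splitting is the kernel/range decomposition of the idempotent `e`.
-/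

namespace LinearMap

variable {R M N : Type*} [CommRing R] [AddCommGroup M] [Module R M] [AddCommGroup N] [Module R N]

theorem exists_eq_smul_of_forall_exists_eq_smul {t : R} (ht : IsSMulRegular N t)
    (d : M →ₗ[R] N) (hdt : ∀ m, ∃ n, d m = t • n) : ∃ e : M →ₗ[R] N, d = t • e := by
  have hd : ∀ m, d m ∈ range (lsmul R N t) := fun m ↦ (hdt m).imp fun _ h ↦ h.symm
  let φ := LinearEquiv.ofInjective (lsmul R N t) ht
  refine ⟨φ.symm ∘ₗ d.codRestrict _ hd, ext fun m ↦ ?_⟩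
  have h := LinearEquiv.ofInjective_apply (lsmul R N t) (h := ht) (φ.symm ⟨d m, hd m⟩)
  rwa [φ.apply_symm_apply] at h

theorem isIdempotentElem_of_smul_comp_smul {t : R} (ht : IsSMulRegular M t) {e : M →ₗ[R] M}
    (h : (t • e) ∘ₗ (t • e) = t • t • e) : IsIdempotentElem e := by
  ext m
  refine ht (ht ?_)
  simpa using congr($h m)

end LinearMap

theorem stmt5_general (R : Type*) [CommRing R] [IsDomain R]
    (t : R) (ht : Irreducible t)
    (M : Type*) [AddCommGroup M] [Module R M] [Module.Free R M]
    (d : M →ₗ[R] M) (hd : d ∘ₗ d = t • d)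
    (hdt : ∀ m : M, ∃ m' : M, d m = t • m') :
    ∃ e : M →ₗ[R] M,
      e ∘ₗ e = e ∧
      d = t • e ∧
      IsCompl (LinearMap.range (LinearMap.id - e)) (LinearMap.range e) ∧
      (∀ m : M, d (m - e m) = 0) ∧
      (∀ m : M, d (e m) = t • e m) := by
  have ht' : IsSMulRegular M t := smul_right_injective M ht.ne_zero
  obtain ⟨e, rfl⟩ := LinearMap.exists_eq_smul_of_forall_exists_eq_smul ht' d hdt
  have he : IsIdempotentElem e := LinearMap.isIdempotentElem_of_smul_comp_smul ht' hd
  have hem (m : M) : e (e m) = e m := congr($he m)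
  refine ⟨e, he, rfl, ?_, fun m ↦ by simp [hem], fun m ↦ by simp [hem]⟩
  rw [← LinearMap.IsIdempotentElem.ker_eq_range he]
  exact (LinearMap.IsIdempotentElem.isCompl he).symm

/-- Let `R` be a complete DVR with uniformizer `t`, and `M` an
`S = R[d]/(d(d−t))`-module which is finitely generated free over `R` (so `M` carries
an `R`-linear `d` with `d(d − t) = 0`, i.e. `d ∘ d = t • d`), such that `d` acts as `0`
on `M/tM` (i.e. `dM ⊆ tM`).  Then `d = t·e` for an idempotent endomorphism `e` of `M`,
and `M = (1−e)M ⊕ eM` as `S`-modules, `d` acting by `0` on `(1−e)M` and by `t` on `eM`. -/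
theorem stmt5 (R : Type*) [CommRing R] [IsDomain R] [IsDiscreteValuationRing R]
    [IsLocalRing R] [IsAdicComplete (IsLocalRing.maximalIdeal R) R]
    (t : R) (ht : Irreducible t)
    (M : Type*) [AddCommGroup M] [Module R M] [Module.Free R M] [Module.Finite R M]
    (d : M →ₗ[R] M) (hd : d ∘ₗ d = t • d)
    (hdt : ∀ m : M, ∃ m' : M, d m = t • m') :
    ∃ e : M →ₗ[R] M,
      e ∘ₗ e = e ∧
      d = t • e ∧
      IsCompl (LinearMap.range (LinearMap.id - e)) (LinearMap.range e) ∧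
      (∀ m : M, d (m - e m) = 0) ∧
      (∀ m : M, d (e m) = t • e m) :=
  stmt5_general R t ht M d hd hdt
end

section
/- Let M be an S-module over S = R[d]/(d(d−t)) (R a complete DVR with uniformizer t), finitely generated free over R. Let d̄ be the induced endomorphism of M/tM (so d̄² = 0). For v̄ ∈ ker d̄ with lift v ∈ M, the element w := t⁻¹dv lies in M, its image w̄ lies in ker d̄, and w̄ mod im d̄ is independent of the choice of lift v. Moreover the induced map ē on ker d̄/im d̄ satisfies ē² = ē. -/
/-!
Write `d v = t • w`. Since `d ∘ d = t • d`, we get `t • d w = d (d v) = t • d v = t • (t • w)`,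
and as `t` is a non-zero-divisor on the free module `M`, `d w = t • w`. So `w` is an eigenvector
of `d` with eigenvalue `t`, which gives all three claims: `d w ∈ tM`; the `u` with `d w = t • u`
is `w` itself; and if `v₁ - v₂ = t • m` then cancelling `t` in `t • (w₁ - w₂) = d (t • m)`
gives `w₁ - w₂ = d m`.
-/

namespace LinearMap

variable {R M : Type*} [CommRing R] [AddCommGroup M] [Module R M]
  {t : R} {d : M →ₗ[R] M}

theorem apply_eq_smul_of_apply_eq_smul (ht : IsSMulRegular M t) (hd : d ∘ₗ d = t • d)
    {v w : M} (hvw : d v = t • w) : d w = t • w := by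
  apply ht
  calc t • d w = d (d v) := by rw [hvw, map_smul]
    _ = t • d v := LinearMap.congr_fun hd v
    _ = t • t • w := by rw [hvw]

theorem sub_eq_apply_of_sub_eq_smul (ht : IsSMulRegular M t)
    {v₁ v₂ w₁ w₂ m : M} (h₁ : d v₁ = t • w₁) (h₂ : d v₂ = t • w₂) (hm : v₁ - v₂ = t • m) :
    w₁ - w₂ = d m := by
  apply ht
  show t • (w₁ - w₂) = t • d m
  rw [smul_sub, ← h₁, ← h₂, ← map_sub, hm, map_smul]

end LinearMap

open LinearMap in
theorem stmt6_general (R : Type*) [CommRing R] [IsDomain R]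
    (t : R) (ht : Irreducible t)
    (M : Type*) [AddCommGroup M] [Module R M] [Module.Free R M]
    (d : M →ₗ[R] M) (hd : d ∘ₗ d = t • d) :
    (∀ v w : M, d v = t • w → ∃ u : M, d w = t • u) ∧
    (∀ v₁ v₂ w₁ w₂ : M, d v₁ = t • w₁ → d v₂ = t • w₂ →
      (∃ m : M, v₁ - v₂ = t • m) → ∃ a b : M, w₁ - w₂ = d a + t • b) ∧
    (∀ v w u : M, d v = t • w → d w = t • u → ∃ a b : M, u - w = d a + t • b) := by
  have hreg : IsSMulRegular M t := .of_ne_zero ht.ne_zero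
  have eigen {v w : M} (hvw : d v = t • w) : d w = t • w :=
    apply_eq_smul_of_apply_eq_smul hreg hd hvw
  refine ⟨fun v w hvw => ⟨w, eigen hvw⟩, ?_, ?_⟩
  · rintro v₁ v₂ w₁ w₂ h₁ h₂ ⟨m, hm⟩
    exact ⟨m, 0, by rw [sub_eq_apply_of_sub_eq_smul hreg h₁ h₂ hm, smul_zero, add_zero]⟩
  · intro v w u hvw hwu
    have hu : u = w := hreg (hwu.symm.trans (eigen hvw))
    exact ⟨0, 0, by simp [hu]⟩

/-- Let `R` be a complete DVR with uniformizer `t`, and `M` an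
`S = R[d]/(d(d−t))`-module, free of finite rank over `R` (so `d ∘ d = t • d`).
Working with representatives for the reduction `M/tM` (with induced map `d̄`,
`d̄² = 0`): if `v̄ ∈ ker d̄`, i.e. `d v = t • w` for some `w ∈ M`
(`w = t⁻¹ d v` lies in `M`), then:
(1) `w̄ ∈ ker d̄`, i.e. `d w ∈ tM`;
(2) `w̄` modulo `im d̄` is independent of the choice of the lift `v`: if
`v₁ ≡ v₂ (mod tM)`, `d v₁ = t • w₁`, `d v₂ = t • w₂`, then `w₁ − w₂ ∈ d M + t M`;
(3) the induced map `ē` on `ker d̄ / im d̄` is idempotent: if `d v = t • w` and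
`d w = t • u` then `u − w ∈ d M + t M`. -/
theorem stmt6 (R : Type*) [CommRing R] [IsDomain R] [IsDiscreteValuationRing R]
    [IsLocalRing R] [IsAdicComplete (IsLocalRing.maximalIdeal R) R]
    (t : R) (ht : Irreducible t)
    (M : Type*) [AddCommGroup M] [Module R M] [Module.Free R M] [Module.Finite R M]
    (d : M →ₗ[R] M) (hd : d ∘ₗ d = t • d) :
    (∀ v w : M, d v = t • w → ∃ u : M, d w = t • u) ∧
    (∀ v₁ v₂ w₁ w₂ : M, d v₁ = t • w₁ → d v₂ = t • w₂ →
      (∃ m : M, v₁ - v₂ = t • m) → ∃ a b : M, w₁ - w₂ = d a + t • b) ∧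
    (∀ v w u : M, d v = t • w → d w = t • u → ∃ a b : M, u - w = d a + t • b) :=
  stmt6_general R t ht M d hd
end

section
/- Let k have characteristic 2 and let A be an associative algebra with derivation D, D² = 0, and bracket [x,y] = xy + yx + D(y)D(x). Then for every x ∈ A with Dx = 0, one has [x,x] = 0. Moreover, defining Q(y) = y² on elements y with Dy = 0, one has [Q(y),x] = [y,[y,x]] for all such y and all x ∈ A. -/
/-! A derivation kills `y²` whenever it kills `y`, so for `D y = 0` every correction term
`D(·) D(·)` in the identities vanishes, and they reduce to `x² + x² = 0` and
`y(yx + xy) + (yx + xy)y = y²x + xy² + 2yxy`, which hold because `2 = 0` in `A`. -/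

theorem Algebra.two_eq_zero_of_charP_two (k A : Type*) [CommSemiring k] [CharP k 2]
    [Semiring A] [Algebra k A] : (2 : A) = 0 := by
  rw [← map_ofNat (algebraMap k A) 2, CharP.ofNat_eq_zero, map_zero]

section TwoEqZero

variable {A : Type*} [Ring A] (h2 : (2 : A) = 0)
include h2

theorem add_self_eq_zero_of_two_eq_zero (a : A) : a + a = 0 := by
  rw [← two_mul, h2, zero_mul]

theorem anticomm_anticomm_eq_anticomm_mul_self_of_two_eq_zero (x y : A) :
    y * (y * x + x * y) + (y * x + x * y) * y = y * y * x + x * (y * y) := by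
  have hyxy : y * x * y + y * x * y = 0 := add_self_eq_zero_of_two_eq_zero h2 _
  calc y * (y * x + x * y) + (y * x + x * y) * y
      = y * y * x + x * (y * y) + (y * x * y + y * x * y) := by noncomm_ring
    _ = y * y * x + x * (y * y) := by rw [hyxy, add_zero]

end TwoEqZero

theorem map_mul_self_eq_zero_of_leibniz {A : Type*} [NonUnitalNonAssocSemiring A] (D : A → A)
    (hder : ∀ x y : A, D (x * y) = D x * y + x * D y) {y : A} (hy : D y = 0) :
    D (y * y) = 0 := by
  rw [hder, hy, zero_mul, mul_zero, add_zero]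

theorem stmt11_general (k : Type*) [Field k] [CharP k 2]
    (A : Type*) [Ring A] [Algebra k A]
    (D : A →ₗ[k] A)
    (hder : ∀ x y : A, D (x * y) = D x * y + x * D y) :
    (∀ x : A, D x = 0 → x * x + x * x + D x * D x = 0) ∧
    (∀ y x : A, D y = 0 →
      (y * y) * x + x * (y * y) + D x * D (y * y) =
        y * (y * x + x * y + D x * D y) + (y * x + x * y + D x * D y) * y
          + D (y * x + x * y + D x * D y) * D y) := by
  have h2 : (2 : A) = 0 := Algebra.two_eq_zero_of_charP_two k A
  refine ⟨fun x hx => ?_, fun y x hy => ?_⟩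
  · rw [hx, mul_zero, add_zero, add_self_eq_zero_of_two_eq_zero h2]
  · rw [map_mul_self_eq_zero_of_leibniz D hder hy, hy]
    simp only [mul_zero, add_zero]
    exact (anticomm_anticomm_eq_anticomm_mul_self_of_two_eq_zero h2 x y).symm

/-- `k` of characteristic 2, `A` an associative `k`-algebra, `D` a
`k`-linear derivation with `D² = 0`, bracket `[x,y] := xy + yx + D(y)D(x)`,
`Q(y) := y²`.  Then `[x,x] = 0` for every `x` with `Dx = 0`, and for every `y` with
`Dy = 0` and every `x ∈ A`, `[Q(y), x] = [y, [y, x]]`. -/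
theorem stmt11 (k : Type*) [Field k] [CharP k 2]
    (A : Type*) [Ring A] [Algebra k A]
    (D : A →ₗ[k] A)
    (hder : ∀ x y : A, D (x * y) = D x * y + x * D y)
    (hD2 : D ∘ₗ D = 0) :
    (∀ x : A, D x = 0 → x * x + x * x + D x * D x = 0) ∧
    (∀ y x : A, D y = 0 →
      (y * y) * x + x * (y * y) + D x * D (y * y) =
        y * (y * x + x * y + D x * D y) + (y * x + x * y + D x * D y) * y
          + D (y * x + x * y + D x * D y) * D y) :=
  stmt11_general k A D hder
end

section
/- Let R be a 2-adic complete DVR with uniformizer t (t²/2 a unit times (1+tR)) and let 𝔤 be a free R-module of rank 1 with basis y, d(y) = ty, abelian bracket. Then U(𝔤) := S𝔤 with the relation coming from twisted skew-symmetry equals R[y]/(2y²); its R-torsion submodule is the ideal generated by y², and the quotient by torsion is R[y]/(y²), which is a free R-module with basis 1, y. -/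
/-! If the class of `f` modulo `2X²` is killed by a non-zero-divisor `r`, then `X² ∣ r f`, hence
(comparing coefficients) `X² ∣ f`; conversely multiples of `X²` are killed by `2 = t²c`, a
non-zero-divisor. So the torsion is the ideal `(X²)`, the quotient by it is `R[X]/(X²)`, and that
is free on the power basis `1, X`. -/

open Polynomial
open scoped nonZeroDivisors

namespace Polynomial

variable {R : Type*} [CommRing R]

theorem X_pow_dvd_of_dvd_C_mul {r : R} (hr : r ∈ R⁰) {n : ℕ} {f : R[X]}
    (h : X ^ n ∣ C r * f) : X ^ n ∣ f := by
  rw [X_pow_dvd_iff] at h ⊢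
  intro d hd
  simpa only [coeff_C_mul, mul_comm r, mul_right_mem_nonZeroDivisors_eq_zero_iff hr] using h d hd

theorem smul_quotient_mk_eq_mk_C_mul (I : Ideal R[X]) (r : R) (f : R[X]) :
    r • Ideal.Quotient.mk I f = Ideal.Quotient.mk I (C r * f) := by
  rw [← smul_eq_C_mul, ← Ideal.Quotient.mkₐ_eq_mk R I, map_smul]

theorem torsion_quotient_span_C_mul_X_pow {a : R} (ha : a ∈ R⁰) (n : ℕ) :
    Submodule.torsion R (R[X] ⧸ Ideal.span {C a * X ^ n}) =
      (Ideal.span {Ideal.Quotient.mk (Ideal.span {C a * X ^ n}) (X ^ n)}).restrictScalars R := by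
  ext x
  obtain ⟨f, rfl⟩ := Ideal.Quotient.mk_surjective x
  rw [Submodule.mem_torsion_iff, Submodule.restrictScalars_mem, Ideal.mem_span_singleton]
  constructor
  · rintro ⟨⟨r, hr⟩, hf⟩
    rw [Submonoid.mk_smul, smul_quotient_mk_eq_mk_C_mul, Ideal.Quotient.eq_zero_iff_mem,
      Ideal.mem_span_singleton] at hf
    obtain ⟨g, rfl⟩ := X_pow_dvd_of_dvd_C_mul hr (dvd_trans (dvd_mul_left _ _) hf)
    exact ⟨Ideal.Quotient.mk _ g, map_mul _ _ _⟩
  · rintro ⟨g, hg⟩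
    obtain ⟨g, rfl⟩ := Ideal.Quotient.mk_surjective g
    refine ⟨⟨a, ha⟩, ?_⟩
    rw [Submonoid.mk_smul, hg, ← map_mul, smul_quotient_mk_eq_mk_C_mul,
      Ideal.Quotient.eq_zero_iff_mem, Ideal.mem_span_singleton, ← mul_assoc]
    exact dvd_mul_right _ _

noncomputable def quotientSpanCMulXPowTorsionEquiv {a : R} (ha : a ∈ R⁰) (n : ℕ) :
    ((R[X] ⧸ Ideal.span {C a * X ^ n}) ⧸
        Submodule.torsion R (R[X] ⧸ Ideal.span {C a * X ^ n})) ≃ₗ[R]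
      R[X] ⧸ Ideal.span {(X : R[X]) ^ n} :=
  have hle : Ideal.span {C a * X ^ n} ≤ Ideal.span {X ^ n} :=
    Ideal.span_singleton_le_span_singleton.mpr (dvd_mul_left _ _)
  have hmap : (Ideal.span {X ^ n}).map (Ideal.Quotient.mkₐ R (Ideal.span {C a * X ^ n})) =
      Ideal.span {Ideal.Quotient.mk (Ideal.span {C a * X ^ n}) (X ^ n)} := by
    rw [Ideal.map_span, Set.image_singleton, Ideal.Quotient.mkₐ_eq_mk]
  (Submodule.quotEquivOfEq _ _ ((torsion_quotient_span_C_mul_X_pow ha n).trans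
      (congrArg _ hmap.symm))).trans <|
    (Submodule.Quotient.restrictScalarsEquiv R _).trans
      (DoubleQuot.quotQuotEquivQuotOfLEₐ R hle).toLinearEquiv

variable [Nontrivial R]

noncomputable def quotientSpanXPowBasis (n : ℕ) :
    Module.Basis (Fin n) R (R[X] ⧸ Ideal.span {(X : R[X]) ^ n}) :=
  (AdjoinRoot.powerBasis' (monic_X_pow n)).basis.reindex
    (finCongr ((AdjoinRoot.powerBasis'_dim _).trans (natDegree_X_pow n)))

theorem quotientSpanXPowBasis_apply (n : ℕ) (i : Fin n) :
    (quotientSpanXPowBasis n i : R[X] ⧸ _) =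
      Ideal.Quotient.mk (Ideal.span {X ^ n}) (X ^ (i : ℕ) : R[X]) := by
  change (AdjoinRoot.powerBasis' (monic_X_pow n)).basis.reindex _ i =
    AdjoinRoot.mk _ (X ^ (i : ℕ))
  rw [Module.Basis.reindex_apply, PowerBasis.basis_eq_pow, AdjoinRoot.powerBasis'_gen]
  rfl

end Polynomial

theorem stmt16_general (R : Type*) [CommRing R] [IsDomain R]
    (t : R) (ht : Irreducible t) (c : R) (hc : t ^ 2 * c = 2) (hcu : IsUnit c) :
    letI A := Polynomial R ⧸ Ideal.span {(C (2 : R)) * (X : Polynomial R) ^ 2}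
    Submodule.torsion R A =
      (Ideal.span {Ideal.Quotient.mk
          (Ideal.span {(C (2 : R)) * (X : Polynomial R) ^ 2})
          ((X : Polynomial R) ^ 2)}).restrictScalars R ∧
    Nonempty ((A ⧸ Submodule.torsion R A) ≃ₗ[R]
      (Polynomial R ⧸ Ideal.span {(X : Polynomial R) ^ 2})) ∧
    ∃ B : Module.Basis (Fin 2) R (Polynomial R ⧸ Ideal.span {(X : Polynomial R) ^ 2}),
      B 0 = 1 ∧
      B 1 = Ideal.Quotient.mk (Ideal.span {(X : Polynomial R) ^ 2}) X := by
  have h2 : (2 : R) ∈ R⁰ :=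
    mem_nonZeroDivisors_of_ne_zero (hc ▸ mul_ne_zero (pow_ne_zero 2 ht.ne_zero) hcu.ne_zero)
  refine ⟨torsion_quotient_span_C_mul_X_pow h2 2, ⟨quotientSpanCMulXPowTorsionEquiv h2 2⟩,
    quotientSpanXPowBasis 2, ?_, ?_⟩ <;>
  simp [quotientSpanXPowBasis_apply]

/-- Let `R` be a 2-adic complete DVR with uniformizer `t` (so
`t²·c = 2` for a unit `c`).  For the rank-1 module `𝔤 = R·y` with `d y = t y` and
abelian bracket, the enveloping algebra is `U(𝔤) = R[y]/(2y²)`.  Its `R`-torsion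
submodule is the ideal generated by `y²`, and the quotient by the torsion is
`R[y]/(y²)`, a free `R`-module with basis `1, y`. -/
theorem stmt16 (R : Type*) [CommRing R] [IsDomain R] [IsDiscreteValuationRing R]
    [IsLocalRing R] [IsAdicComplete (IsLocalRing.maximalIdeal R) R]
    (t : R) (ht : Irreducible t) (c : R) (hc : t ^ 2 * c = 2) (hcu : IsUnit c) :
    letI A := Polynomial R ⧸ Ideal.span {(C (2 : R)) * (X : Polynomial R) ^ 2}
    Submodule.torsion R A =
      (Ideal.span {Ideal.Quotient.mk
          (Ideal.span {(C (2 : R)) * (X : Polynomial R) ^ 2})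
          ((X : Polynomial R) ^ 2)}).restrictScalars R ∧
    Nonempty ((A ⧸ Submodule.torsion R A) ≃ₗ[R]
      (Polynomial R ⧸ Ideal.span {(X : Polynomial R) ^ 2})) ∧
    ∃ B : Module.Basis (Fin 2) R (Polynomial R ⧸ Ideal.span {(X : Polynomial R) ^ 2}),
      B 0 = 1 ∧
      B 1 = Ideal.Quotient.mk (Ideal.span {(X : Polynomial R) ^ 2}) X :=
  stmt16_general R t ht c hc hcu
end

section
/- Let k have characteristic 2 and let L be a weakly alternating Lie superalgebra in Ver₄⁺(k), i.e., [x,x] ∈ im D for all x ∈ L. Then the quadratic map Q : L₁ → L₀ maps im D into im D, and it induces a well-defined quadratic map Q̄ : L₁/im D → L₀/im D, giving the cohomology H(L) = ker D/im D, with grading H₀ = L₀/im D, H₁ = L₁/im D, the structure of a Lie superalgebra over k. -/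
/-!
Everything reduces to the Leibniz rule and weak alternation. For a cycle `y` (`D y = 0`),
`[y, D x] = D [y, x]`, and the skew-symmetry defect `[D y, D x]` vanishes, so the bracket
descends to `ker D / im D` and is symmetric there. For `y ∈ L₁`,
`Q (y + D x) = Q y + [y, D x] + [x, x]`, whose last two terms lie in `im D`, so `Q`
descends as well; the squaring identities then hold on the nose.
-/

open LinearMap

section

variable {R M : Type*} [CommRing R] [AddCommGroup M] [Module R M]
  (D : M →ₗ[R] M) (β : M →ₗ[R] M →ₗ[R] M)

theorem bracket_apply_mem_range_of_leibniz
    (hder : ∀ x y : M, D (β x y) = β (D x) y + β x (D y))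
    {x : M} (hx : D x = 0) (y : M) : β x (D y) ∈ range D :=
  ⟨β x y, by rw [hder, hx, map_zero, LinearMap.zero_apply, zero_add]⟩

theorem bracket_comm_of_apply_eq_zero
    (hskew : ∀ x y : M, β x y = β y x + β (D y) (D x))
    {y : M} (hy : D y = 0) (x : M) : β x y = β y x := by
  rw [hskew x y, hy, map_zero, LinearMap.zero_apply, add_zero]

variable {D β} {Q : M → M}

theorem squaring_mem_range (hQD : ∀ x : M, Q (D x) = β x x)
    (hwalt : ∀ x : M, β x x ∈ range D) {z : M} (hz : z ∈ range D) : Q z ∈ range D := by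
  obtain ⟨x, rfl⟩ := hz
  exact hQD x ▸ hwalt x

theorem squaring_add_sub_mem_range {L₁ : Submodule R M}
    (hrange : range D ≤ L₁) (hker : L₁ ≤ ker D)
    (hder : ∀ x y : M, D (β x y) = β (D x) y + β x (D y))
    (hQD : ∀ x : M, Q (D x) = β x x)
    (hQadd : ∀ y₁ ∈ L₁, ∀ y₂ ∈ L₁, Q (y₁ + y₂) - Q y₁ - Q y₂ = β y₁ y₂)
    (hwalt : ∀ x : M, β x x ∈ range D)
    {y : M} (hy : y ∈ L₁) {z : M} (hz : z ∈ range D) : Q (y + z) - Q y ∈ range D := by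
  have hdecomp : Q (y + z) - Q y = β y z + Q z := by
    rw [← hQadd y hy z (hrange hz)]
    abel
  obtain ⟨x, rfl⟩ := hz
  rw [hdecomp]
  exact add_mem (bracket_apply_mem_range_of_leibniz D β hder (hker hy) x)
    (squaring_mem_range hQD hwalt ⟨x, rfl⟩)

end

theorem stmt18_general (k : Type*) [Field k]
    (L : Type*) [AddCommGroup L] [Module k L]
    (D : L →ₗ[k] L)
    (β : L →ₗ[k] L →ₗ[k] L)
    (hskew : ∀ x y : L, β x y = β y x + β (D y) (D x))
    (hder : ∀ x y : L, D (β x y) = β (D x) y + β x (D y))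
    (L₀ L₁ : Submodule k L)
    (hinf : L₀ ⊓ L₁ = LinearMap.range D)
    (hsup : L₀ ⊔ L₁ = LinearMap.ker D)
    (Q : L → L)
    (hQD : ∀ x : L, Q (D x) = β x x)
    (hQadd : ∀ y₁ ∈ L₁, ∀ y₂ ∈ L₁, Q (y₁ + y₂) - Q y₁ - Q y₂ = β y₁ y₂)
    (hQbr : ∀ y ∈ L₁, ∀ x : L, β (Q y) x = β y (β y x))
    (hwalt : ∀ x : L, β x x ∈ LinearMap.range D) :
    (∀ z ∈ LinearMap.range D, Q z ∈ LinearMap.range D) ∧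
    (∀ y ∈ L₁, ∀ z ∈ LinearMap.range D, Q (y + z) - Q y ∈ LinearMap.range D) ∧
    (∀ x : L, D x = 0 → ∀ y : L, β x (D y) ∈ LinearMap.range D) ∧
    (∀ x y : L, D x = 0 → D y = 0 → β x y - β y x ∈ LinearMap.range D) ∧
    (∀ y₁ ∈ L₁, ∀ y₂ ∈ L₁,
      Q (y₁ + y₂) - Q y₁ - Q y₂ - β y₁ y₂ ∈ LinearMap.range D) ∧
    (∀ y ∈ L₁, ∀ x ∈ LinearMap.ker D,
      β (Q y) x - β y (β y x) ∈ LinearMap.range D) := by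
  have hrange : range D ≤ L₁ := hinf ▸ inf_le_right
  have hker : L₁ ≤ ker D := le_sup_right.trans hsup.le
  refine ⟨fun z hz => squaring_mem_range hQD hwalt hz,
    fun y hy z hz => squaring_add_sub_mem_range hrange hker hder hQD hQadd hwalt hy hz,
    fun x hx y => bracket_apply_mem_range_of_leibniz D β hder hx y, ?_, ?_, ?_⟩
  · intro x y _ hy
    rw [bracket_comm_of_apply_eq_zero D β hskew hy, sub_self]
    exact zero_mem _
  · intro y₁ h₁ y₂ h₂
    rw [hQadd y₁ h₁ y₂ h₂, sub_self]
    exact zero_mem _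
  · intro y hy x _
    rw [hQbr y hy x, sub_self]
    exact zero_mem _

/-- Let `k` have characteristic 2 and `L` a weakly alternating Lie
superalgebra in `Ver₄⁺(k)`: an operadic Lie algebra `(L, D, β)` satisfying the PBW
condition (`Dx = 0 → [x,x] = 0`), with a super-structure `L₀, L₁`
(`L₀ ⊓ L₁ = im D`, `L₀ ⊔ L₁ = ker D`, `[Lᵢ, Lⱼ] ⊆ L_{i+j}`) and squaring map
`Q : L₁ → L₀` (`Q(Dx) = [x,x]`, `Q(y₁+y₂) − Qy₁ − Qy₂ = [y₁,y₂]`,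
`[Q(y),x] = [y,[y,x]]`), such that `[x,x] ∈ im D` for all `x` (weakly alternating).
Then `Q` maps `im D` into `im D` and descends to a well-defined squaring map
`Q̄ : L₁/im D → L₀/im D`, and the bracket descends to the cohomology
`H(L) = ker D/im D` with grading `H₀ = L₀/im D`, `H₁ = L₁/im D`, giving `H(L)` the
structure of a Lie superalgebra over `k` (the superalgebra identities hold modulo
`im D`). -/
theorem stmt18 (k : Type*) [Field k] [CharP k 2]
    (L : Type*) [AddCommGroup L] [Module k L]
    (D : L →ₗ[k] L) (hD : D ∘ₗ D = 0)
    (β : L →ₗ[k] L →ₗ[k] L)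
    (hskew : ∀ x y : L, β x y = β y x + β (D y) (D x))
    (hder : ∀ x y : L, D (β x y) = β (D x) y + β x (D y))
    (hjac : ∀ x y z : L,
      β (β x y) z + β (β z x) y + β (β y z) x
        + β (β (D x) y) (D z) + β (β (D z) x) (D y) + β (β (D y) z) (D x) = 0)
    (hpbw : ∀ x : L, D x = 0 → β x x = 0)
    (L₀ L₁ : Submodule k L)
    (hinf : L₀ ⊓ L₁ = LinearMap.range D)
    (hsup : L₀ ⊔ L₁ = LinearMap.ker D)
    (h00 : ∀ x ∈ L₀, ∀ y ∈ L₀, β x y ∈ L₀)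
    (h01 : ∀ x ∈ L₀, ∀ y ∈ L₁, β x y ∈ L₁)
    (h10 : ∀ x ∈ L₁, ∀ y ∈ L₀, β x y ∈ L₁)
    (h11 : ∀ x ∈ L₁, ∀ y ∈ L₁, β x y ∈ L₀)
    (Q : L → L)
    (hQmap : ∀ y ∈ L₁, Q y ∈ L₀)
    (hQD : ∀ x : L, Q (D x) = β x x)
    (hQsmul : ∀ (c : k), ∀ y ∈ L₁, Q (c • y) = (c ^ 2) • Q y)
    (hQadd : ∀ y₁ ∈ L₁, ∀ y₂ ∈ L₁, Q (y₁ + y₂) - Q y₁ - Q y₂ = β y₁ y₂)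
    (hQbr : ∀ y ∈ L₁, ∀ x : L, β (Q y) x = β y (β y x))
    (hwalt : ∀ x : L, β x x ∈ LinearMap.range D) :
    (∀ z ∈ LinearMap.range D, Q z ∈ LinearMap.range D) ∧
    (∀ y ∈ L₁, ∀ z ∈ LinearMap.range D, Q (y + z) - Q y ∈ LinearMap.range D) ∧
    (∀ x : L, D x = 0 → ∀ y : L, β x (D y) ∈ LinearMap.range D) ∧
    (∀ x y : L, D x = 0 → D y = 0 → β x y - β y x ∈ LinearMap.range D) ∧
    (∀ y₁ ∈ L₁, ∀ y₂ ∈ L₁,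
      Q (y₁ + y₂) - Q y₁ - Q y₂ - β y₁ y₂ ∈ LinearMap.range D) ∧
    (∀ y ∈ L₁, ∀ x ∈ LinearMap.ker D,
      β (Q y) x - β y (β y x) ∈ LinearMap.range D) :=
  stmt18_general k L D β hskew hder L₀ L₁ hinf hsup Q hQD hQadd hQbr hwalt
end
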